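/- Fix y ∈ ℝⁿ, X ∈ ℝ^{n×p} and λ > 0. If β* is an optimal solution to the trimmed Lasso problem (TL_{λ,ℓ}): min over β of ½‖y − Xβ‖₂² + λ T_ℓ(β), then the optimal objective value satisfies Z(TL_{λ,ℓ}) = (‖y‖₂² − ‖Xβ*‖₂²)/2. -/
import Mathlib


open Finset

/-- Absolute values of the entries of `β`, sorted in increasing order. -/
noncomputable def sortAbs {p : ℕ} (β : Fin p → ℝ) : Fin p → ℝ :=
  fun i => |β (Tuple.sort (fun j => |β j|) i)|

/-- The trimmed Lasso penalty `T_k(β)`: sum of the `p - k` smallest `|β_i|`. -/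
noncomputable def trimmedLasso {p : ℕ} (k : ℕ) (β : Fin p → ℝ) : ℝ :=
  ∑ i ∈ Finset.univ.filter (fun i : Fin p => (i : ℕ) < p - k), sortAbs β i

/-- The objective of the trimmed Lasso problem `(TL_{λ,k})`. -/
noncomputable def tlObj {n p : ℕ} (y : Fin n → ℝ) (X : Matrix (Fin n) (Fin p) ℝ)
    (lam : ℝ) (k : ℕ) (β : Fin p → ℝ) : ℝ :=
  (1 / 2) * (∑ i, (y i - X.mulVec β i) ^ 2) + lam * trimmedLasso k β

lemma sortAbs_smul {p : ℕ} (t : ℝ) (ht : 0 ≤ t) (β : Fin p → ℝ) :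
    sortAbs (t • β) = fun i => t * sortAbs β i := by
  have key : (fun j => |(t • β) j|) ∘ (Tuple.sort (fun j => |β j|))
      = (fun j => |(t • β) j|) ∘ Tuple.sort (fun j => |(t • β) j|) := by
    rw [Tuple.comp_sort_eq_comp_iff_monotone]
    have hm : Monotone ((fun j => |β j|) ∘ Tuple.sort (fun j => |β j|)) :=
      Tuple.monotone_sort _
    intro a b hab
    simp only [Function.comp, Pi.smul_apply, smul_eq_mul, abs_mul, abs_of_nonneg ht]
    exact mul_le_mul_of_nonneg_left (hm hab) ht
  funext i
  have := congrFun key i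
  simp only [Function.comp, Pi.smul_apply, smul_eq_mul, abs_mul, abs_of_nonneg ht] at this ⊢
  unfold sortAbs
  simp only [Pi.smul_apply, smul_eq_mul, abs_mul, abs_of_nonneg ht]
  exact this.symm

lemma trimmedLasso_smul {p : ℕ} (k : ℕ) (t : ℝ) (ht : 0 ≤ t) (β : Fin p → ℝ) :
    trimmedLasso k (t • β) = t * trimmedLasso k β := by
  unfold trimmedLasso
  rw [sortAbs_smul t ht, Finset.mul_sum]


/-- Lemma 4.1(a): if `β*` is optimal for `(TL_{λ,ℓ})`, then the
optimal objective value equals `(‖y‖₂² - ‖Xβ*‖₂²) / 2`. -/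
theorem tl_optimal_value {n p : ℕ} (y : Fin n → ℝ) (X : Matrix (Fin n) (Fin p) ℝ)
    (lam : ℝ) (hlam : 0 < lam) (ℓ : ℕ) (hℓ : ℓ ≤ p) (βs : Fin p → ℝ)
    (hopt : ∀ β, tlObj y X lam ℓ βs ≤ tlObj y X lam ℓ β) :
    sInf {v : ℝ | ∃ β : Fin p → ℝ, v = tlObj y X lam ℓ β} =
      ((∑ i, (y i) ^ 2) - ∑ i, (X.mulVec βs i) ^ 2) / 2 := by
  -- sInf = objective at βs
  have hmem : tlObj y X lam ℓ βs ∈ {v : ℝ | ∃ β : Fin p → ℝ, v = tlObj y X lam ℓ β} :=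
    ⟨βs, rfl⟩
  have hinf : sInf {v : ℝ | ∃ β : Fin p → ℝ, v = tlObj y X lam ℓ β} = tlObj y X lam ℓ βs := by
    apply le_antisymm
    · exact csInf_le ⟨tlObj y X lam ℓ βs, fun v ⟨β, hβ⟩ => hβ ▸ hopt β⟩ hmem
    · exact le_csInf ⟨_, hmem⟩ (fun v ⟨β, hβ⟩ => hβ ▸ hopt β)
  rw [hinf]
  -- abbreviations
  set a : ℝ := ∑ i, (X.mulVec βs i) ^ 2 with ha
  set b : ℝ := ∑ i, y i * X.mulVec βs i with hb
  set T : ℝ := trimmedLasso ℓ βs with hT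
  have ha0 : 0 ≤ a := Finset.sum_nonneg fun i _ => sq_nonneg _
  -- objective along scaling
  have hval : ∀ t : ℝ, 0 ≤ t → tlObj y X lam ℓ (t • βs)
      = (1/2) * (∑ i, (y i)^2) - t * b + t^2 / 2 * a + lam * t * T := by
    intro t ht
    unfold tlObj
    rw [trimmedLasso_smul _ _ ht, Matrix.mulVec_smul]
    simp only [Pi.smul_apply, smul_eq_mul]
    have e1 : (1/2 : ℝ) * (∑ i, (y i - t * X.mulVec βs i) ^ 2)
        = ∑ i, ((1/2) * (y i)^2 - t * (y i * X.mulVec βs i)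
            + t^2/2 * (X.mulVec βs i)^2) := by
      rw [Finset.mul_sum]
      exact Finset.sum_congr rfl (fun i _ => by ring)
    rw [e1, Finset.sum_add_distrib, Finset.sum_sub_distrib, ← Finset.mul_sum,
      ← Finset.mul_sum, ← Finset.mul_sum, ← hb, ← ha]
    ring
  -- key: a + lam*T - b = 0
  have hkey : a - b + lam * T = 0 := by
    have hineq : ∀ t : ℝ, 0 ≤ t →
        0 ≤ (t^2 - 1) / 2 * a - (t - 1) * b + lam * (t - 1) * T := by
      intro t ht
      have h1 := hopt (t • βs)
      rw [hval t ht] at h1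
      have h2 : tlObj y X lam ℓ βs
          = (1/2) * (∑ i, (y i)^2) - 1 * b + 1^2 / 2 * a + lam * 1 * T := by
        have := hval 1 zero_le_one
        simpa using this
      rw [h2] at h1
      nlinarith [h1]
    by_contra hne
    set c : ℝ := a - b + lam * T with hc
    have hcne : c ≠ 0 := hne
    have habs : ∀ δ : ℝ, 0 < δ → δ ≤ 1 → |c| ≤ a * δ / 2 := by
      intro δ hδ hδ1
      have hp := hineq (1 + δ) (by linarith)
      have hm := hineq (1 - δ) (by linarith)
      have hp' : 0 ≤ δ^2/2 * a + δ * c := by nlinarith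
      have hm' : 0 ≤ δ^2/2 * a - δ * c := by nlinarith
      rw [abs_le]
      constructor <;> nlinarith
    set δ₀ : ℝ := min 1 (|c| / (a + 1)) with hδ₀
    have hcpos : 0 < |c| := abs_pos.mpr hcne
    have hδpos : 0 < δ₀ := lt_min one_pos (div_pos hcpos (by linarith))
    have h := habs δ₀ hδpos (min_le_left _ _)
    have h2 : a * δ₀ / 2 ≤ a * (|c| / (a + 1)) / 2 := by
      have := min_le_right 1 (|c| / (a + 1))
      have : δ₀ ≤ |c| / (a + 1) := this
      nlinarith
    have h3 : a * (|c| / (a + 1)) / 2 < |c| := by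
      rw [div_lt_iff₀ (by norm_num : (0:ℝ) < 2)] at *
      have : a / (a+1) < 1 := by
        rw [div_lt_one (by linarith)]; linarith
      calc a * (|c| / (a + 1)) = (a / (a+1)) * |c| := by ring
        _ < 1 * |c| := by nlinarith
        _ ≤ |c| * 2 := by nlinarith
    linarith
  -- final computation
  have hobj : tlObj y X lam ℓ βs
      = (1/2) * (∑ i, (y i)^2) - b + (1/2) * a + lam * T := by
    have := hval 1 zero_le_one
    simpa using this
  rw [hobj]
  have : lam * T = b - a := by linarith
  rw [this]; ring
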